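/- Let n₁ ≤ n₂ be positive integers and ε ∈ (0,1], and let c_{ε/2} = (exp(ε/2)+1)/(exp(ε/2)−1). Let {Z'_{i,j} : i ∈ [n₁]} and {W'_{i',j} : i' ∈ [n₂]} be {0,1}-valued random variables such that, for the fixed coordinate j, the variables Z'_{1,j},…,Z'_{n₁,j}, W'_{1,j},…,W'_{n₂,j} are mutually independent, and set p̂_{X,j} = (c_{ε/2}/n₁) Σ_{i=1}^{n₁} (Z'_{i,j} − 1/(exp(ε/2)+1)) and p̂_{Y,j} = (c_{ε/2}/n₂) Σ_{i'=1}^{n₂} (W'_{i',j} − 1/(exp(ε/2)+1)). Then the difference δ̂_j = p̂_{X,j} − p̂_{Y,j} is SG(10/(n₁ε²)). -/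

import Mathlib

/-!
Write `δ̂_j = ∑ₖ aₖ (fₖ - q)` as one weighted sum over the `n₁ + n₂` independent indicators
`f = Sum.elim Z' W'`, with weights `c/n₁` and `-c/n₂`, where `c = c_{ε/2}`. By Hoeffding's lemma
each centred term `aₖ (fₖ - E fₖ)` is sub-Gaussian with proxy `aₖ²/4`, and proxies add over
independent summands, so `δ̂_j` is SG(`c²/(4n₁) + c²/(4n₂)`) ⊆ SG(`c²/(2n₁)`). Finally
`c = coth(ε/4) ≤ 21/(5ε)` for `ε ≤ 1` (from `exp x ≥ 1 + x + x²/2`), so `c²/(2n₁) ≤ 10/(n₁ε²)`.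
-/

open MeasureTheory ProbabilityTheory Real
open scoped NNReal

noncomputable section

/-- `X` is sub-Gaussian with variance proxy `σ²`, written SG(σ²). -/
def IsSubGaussian {Ω : Type*} [MeasurableSpace Ω] (P : Measure Ω) (X : Ω → ℝ) (σ2 : ℝ) : Prop :=
  ∀ l : ℝ, ∫ ω, Real.exp (l * (X ω - ∫ ω', X ω' ∂P)) ∂P ≤ Real.exp (l ^ 2 * σ2 / 2)

section SubGaussian

variable {Ω ι : Type*} [MeasurableSpace Ω] {P : Measure Ω}

lemma IsSubGaussian.mono {X : Ω → ℝ} {σ2 τ2 : ℝ} (h : IsSubGaussian P X σ2) (hστ : σ2 ≤ τ2) :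
    IsSubGaussian P X τ2 := fun l ↦
  (h l).trans <| exp_le_exp.2 <| by nlinarith [sq_nonneg l]

lemma IsSubGaussian.of_hasSubgaussianMGF {X : Ω → ℝ} {c : ℝ≥0}
    (h : HasSubgaussianMGF (fun ω ↦ X ω - ∫ ω', X ω' ∂P) c P) : IsSubGaussian P X c :=
  fun l ↦ (h.mgf_le l).trans_eq <| by rw [mul_comm]

lemma hasSubgaussianMGF_const_mul_sub_integral_of_mem_Icc [IsProbabilityMeasure P] {X : Ω → ℝ}
    (hm : AEMeasurable X P) {l u : ℝ} (hb : ∀ᵐ ω ∂P, X ω ∈ Set.Icc l u) (a : ℝ) :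
    HasSubgaussianMGF (fun ω ↦ a * (X ω - P[X])) (‖a * (u - l)‖₊ ^ 2 / 4) P := by
  convert (hasSubgaussianMGF_of_mem_Icc hm hb).const_mul a using 2
  ext
  -- `const_mul` states the proxy with the raw subtype `⟨a ^ 2, _⟩`, opaque to `push_cast`
  change _ = a ^ 2 * ((‖u - l‖₊ / 2) ^ 2 : ℝ≥0)
  push_cast
  simp only [Real.norm_eq_abs, sq_abs, div_pow]
  ring

lemma hasSubgaussianMGF_sum_mul_sub_integral [Fintype ι] [IsProbabilityMeasure P]
    {f : ι → Ω → ℝ} (h_indep : iIndepFun f P) (hm : ∀ k, AEMeasurable (f k) P)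
    {l u : ι → ℝ} (hb : ∀ k, ∀ᵐ ω ∂P, f k ω ∈ Set.Icc (l k) (u k)) (a : ι → ℝ) :
    HasSubgaussianMGF (fun ω ↦ ∑ k, a k * (f k ω - P[f k]))
      (∑ k, ‖a k * (u k - l k)‖₊ ^ 2 / 4) P :=
  HasSubgaussianMGF.sum_of_iIndepFun
    (h_indep.comp (fun k x ↦ a k * (x - P[f k])) fun _ ↦ by fun_prop)
    fun k _ ↦ by exact hasSubgaussianMGF_const_mul_sub_integral_of_mem_Icc (hm k) (hb k) (a k)

lemma sum_mul_sub_sub_integral [Fintype ι] [IsProbabilityMeasure P] {f : ι → Ω → ℝ}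
    (hf : ∀ k, Integrable (f k) P) (a b : ι → ℝ) (ω : Ω) :
    ∑ k, a k * (f k ω - b k) - ∫ ω', ∑ k, a k * (f k ω' - b k) ∂P =
      ∑ k, a k * (f k ω - P[f k]) := by
  rw [integral_finsetSum (f := fun k ω' ↦ a k * (f k ω' - b k)) _
      fun k _ ↦ ((hf k).sub (integrable_const _)).const_mul _,
    ← Finset.sum_sub_distrib]
  refine Finset.sum_congr rfl fun k _ ↦ ?_
  rw [integral_const_mul, integral_sub (hf k) (integrable_const _), integral_const]
  simp only [probReal_univ, smul_eq_mul, one_mul]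
  ring

lemma isSubGaussian_mul_sum_sub_mul_sum {κ : Type*} [Fintype ι] [Fintype κ]
    [IsProbabilityMeasure P] {Z : ι → Ω → ℝ} {W : κ → Ω → ℝ} (h_indep : iIndepFun (Sum.elim Z W) P)
    (hmZ : ∀ i, AEMeasurable (Z i) P) (hmW : ∀ j, AEMeasurable (W j) P)
    (hZ : ∀ i, ∀ᵐ ω ∂P, Z i ω ∈ Set.Icc 0 1) (hW : ∀ j, ∀ᵐ ω ∂P, W j ω ∈ Set.Icc 0 1)
    (α β q : ℝ) :
    IsSubGaussian P (fun ω ↦ α * ∑ i, (Z i ω - q) - β * ∑ j, (W j ω - q))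
      ((Fintype.card ι * α ^ 2 + Fintype.card κ * β ^ 2) / 4) := by
  set f : ι ⊕ κ → Ω → ℝ := Sum.elim Z W
  set a : ι ⊕ κ → ℝ := Sum.elim (fun _ ↦ α) (fun _ ↦ -β)
  have hm : ∀ k, AEMeasurable (f k) P := Sum.forall.2 ⟨hmZ, hmW⟩
  have hb : ∀ k, ∀ᵐ ω ∂P, f k ω ∈ Set.Icc (0 : ℝ) 1 := Sum.forall.2 ⟨hZ, hW⟩
  have hsum : ∀ ω, α * ∑ i, (Z i ω - q) - β * ∑ j, (W j ω - q) = ∑ k, a k * (f k ω - q) :=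
    fun ω ↦ by simp [a, f, Fintype.sum_sum_type, Finset.mul_sum, sub_eq_add_neg]
  have hproxy : ((∑ k, ‖a k * (1 - 0)‖₊ ^ 2 / 4 : ℝ≥0) : ℝ) =
      (Fintype.card ι * α ^ 2 + Fintype.card κ * β ^ 2) / 4 := by
    push_cast
    simp only [sub_zero, mul_one, norm_eq_abs, sq_abs, Fintype.sum_sum_type, Sum.elim_inl,
      Sum.elim_inr, Finset.sum_const, Finset.card_univ, nsmul_eq_mul, neg_sq, a]
    ring
  simp_rw [hsum, ← hproxy]
  exact IsSubGaussian.of_hasSubgaussianMGF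
    ((hasSubgaussianMGF_sum_mul_sub_integral h_indep hm hb a).congr
      (ae_of_all _ fun ω ↦ (sum_mul_sub_sub_integral
        (fun k ↦ Integrable.of_mem_Icc 0 1 (hm k) (hb k)) a _ ω).symm))

end SubGaussian

lemma sq_exp_add_one_div_exp_sub_one_le {ε : ℝ} (hε0 : 0 < ε) (hε1 : ε ≤ 1) :
    ((exp (ε / 2) + 1) / (exp (ε / 2) - 1)) ^ 2 ≤ 20 / ε ^ 2 := by
  have hquad : 1 + ε / 2 + (ε / 2) ^ 2 / 2 ≤ exp (ε / 2) :=
    quadratic_le_exp_of_nonneg (by linarith)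
  have hexp : 1 < exp (ε / 2) := one_lt_exp_iff.2 (by positivity)
  have hcε : (exp (ε / 2) + 1) / (exp (ε / 2) - 1) * ε ≤ 21 / 5 := by
    rw [div_mul_eq_mul_div, div_le_div_iff₀ (by linarith) (by norm_num)]
    nlinarith [mul_nonneg (mul_nonneg hε0.le (sub_nonneg.2 hε1)) (by linarith : (0:ℝ) ≤ 5 * ε + 4)]
  have hc0 : 0 ≤ (exp (ε / 2) + 1) / (exp (ε / 2) - 1) * ε :=
    mul_nonneg (div_nonneg (by positivity) (by linarith)) hε0.le
  rw [le_div_iff₀ (by positivity), ← mul_pow]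
  nlinarith

/-- the difference `δ̂_j = p̂_{X,j} − p̂_{Y,j}` of rescaled sums of independent
`{0,1}`-valued random variables is SG(10/(n₁ε²)). -/
theorem stmt_14 (Ω : Type) (_ : MeasurableSpace Ω) (P : Measure Ω) [IsProbabilityMeasure P]
    (n₁ n₂ : ℕ) (hn₁ : 0 < n₁) (hn₁₂ : n₁ ≤ n₂) (ε : ℝ) (hε0 : 0 < ε) (hε1 : ε ≤ 1)
    (Z' : Fin n₁ → Ω → ℝ) (W' : Fin n₂ → Ω → ℝ)
    (hmZ : ∀ i, Measurable (Z' i)) (hmW : ∀ i', Measurable (W' i'))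
    (hZ01 : ∀ i ω, Z' i ω = 0 ∨ Z' i ω = 1) (hW01 : ∀ i' ω, W' i' ω = 0 ∨ W' i' ω = 1)
    (hindep : iIndepFun (Sum.elim Z' W') P) :
    IsSubGaussian P
      (fun ω =>
        ((Real.exp (ε / 2) + 1) / (Real.exp (ε / 2) - 1) / n₁) *
            ∑ i, (Z' i ω - 1 / (Real.exp (ε / 2) + 1)) -
          ((Real.exp (ε / 2) + 1) / (Real.exp (ε / 2) - 1) / n₂) *
            ∑ i', (W' i' ω - 1 / (Real.exp (ε / 2) + 1)))
      (10 / (n₁ * ε ^ 2)) := by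
  have hn₁R : (0 : ℝ) < n₁ := by exact_mod_cast hn₁
  have hn₁₂R : (n₁ : ℝ) ≤ n₂ := by exact_mod_cast hn₁₂
  have hc := sq_exp_add_one_div_exp_sub_one_le hε0 hε1
  refine (isSubGaussian_mul_sum_sub_mul_sum hindep (fun i ↦ (hmZ i).aemeasurable)
    (fun i ↦ (hmW i).aemeasurable) (fun i ↦ ae_of_all _ fun ω ↦ ?_)
    (fun i ↦ ae_of_all _ fun ω ↦ ?_) _ _ _).mono ?_
  · rcases hZ01 i ω with h | h <;> simp [h]
  · rcases hW01 i ω with h | h <;> simp [h]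
  set c := (exp (ε / 2) + 1) / (exp (ε / 2) - 1)
  rw [Fintype.card_fin, Fintype.card_fin]
  calc (n₁ * (c / n₁) ^ 2 + n₂ * (c / n₂) ^ 2) / 4
      = c ^ 2 / (4 * n₁) + c ^ 2 / (4 * n₂) := by field_simp
    _ ≤ c ^ 2 / (4 * n₁) + c ^ 2 / (4 * n₁) := by gcongr
    _ = c ^ 2 / 2 / n₁ := by ring
    _ ≤ 20 / ε ^ 2 / 2 / n₁ := by gcongr
    _ = 10 / (n₁ * ε ^ 2) := by ring
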